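/- arXiv:2109.13165 — 7 statements merged into one kernel-verified Lean document; each statement's English description precedes it below -/
import Mathlib

section
/- Let M : ℕ → ℕ → ℂ be upper triangular (M a b = 0 whenever b < a), with all diagonal entries nonzero (M a a ≠ 0 for all a) and pairwise distinct (M a a = M b b implies a = b). Fix a ∈ ℕ. Then there exists a unique v : ℕ → ℂ such that v a = 1, v b = 0 for all b > a, and for every r ∈ ℕ, Σ_{b ∈ [r, a]} M r b · v b = M a a · v r (the sum taken over integers b with r ≤ b ≤ a). That is, v is the (finitely supported) eigenvector of M with eigenvalue M a a, normalized so that its a-th component is 1. -/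
/-!
Row `r < a` of the eigenvector equation reads `(μ - M r r) v r = ∑_{r < b ≤ a} M r b v b` with
`μ = M a a`. Since the diagonal entries are distinct, `μ - M r r ≠ 0`, so the row determines
`v r` from the entries `v b` with `b > r`. Starting from `v a = 1` and `v b = 0` for `b > a`,
this back-substitution defines `v` and shows it is the only solution.
-/

open Finset

variable {K : Type*} [Field K]

theorem sum_Icc_mul_eq_mul_iff {M : ℕ → ℕ → K} {v : ℕ → K} {μ : K} {r a : ℕ} (hr : r ≤ a)
    (hμ : M r r ≠ μ) :
    ∑ b ∈ Icc r a, M r b * v b = μ * v r ↔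
      v r = (∑ b ∈ Ioc r a, M r b * v b) / (μ - M r r) := by
  rw [← add_sum_Ioc_eq_sum_Icc hr, eq_div_iff (sub_ne_zero.2 hμ.symm)]
  constructor <;> intro h <;> linear_combination -h

noncomputable def triangularEigenvector (M : ℕ → ℕ → K) (a r : ℕ) : K :=
  if a < r then 0
  else if r = a then 1
  else (∑ b ∈ (Ioc r a).attach, M r b * triangularEigenvector M a b) / (M a a - M r r)
termination_by a - r
decreasing_by have := mem_Ioc.1 b.2; omega

section

variable (M : ℕ → ℕ → K) {a r : ℕ}

theorem triangularEigenvector_eq_zero_of_lt (h : a < r) : triangularEigenvector M a r = 0 := by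
  rw [triangularEigenvector, if_pos h]

theorem triangularEigenvector_self : triangularEigenvector M a a = 1 := by
  rw [triangularEigenvector]
  simp

theorem triangularEigenvector_of_lt (h : r < a) :
    triangularEigenvector M a r =
      (∑ b ∈ Ioc r a, M r b * triangularEigenvector M a b) / (M a a - M r r) := by
  rw [triangularEigenvector, if_neg h.not_gt, if_neg h.ne,
    sum_attach (Ioc r a) fun b ↦ M r b * triangularEigenvector M a b]

variable {M}

theorem sum_Icc_mul_triangularEigenvector (hdiag : ∀ r < a, M r r ≠ M a a) (r : ℕ) :
    ∑ b ∈ Icc r a, M r b * triangularEigenvector M a b = M a a * triangularEigenvector M a r := by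
  rcases lt_trichotomy r a with h | rfl | h
  · exact (sum_Icc_mul_eq_mul_iff h.le (hdiag r h)).2 (triangularEigenvector_of_lt M h)
  · simp
  · simp [Icc_eq_empty_of_lt h, triangularEigenvector_eq_zero_of_lt M h]

theorem eq_triangularEigenvector (hdiag : ∀ r < a, M r r ≠ M a a) {v : ℕ → K} (hva : v a = 1)
    (hv : ∀ b, a < b → v b = 0)
    (hrow : ∀ r, ∑ b ∈ Icc r a, M r b * v b = M a a * v r) (r : ℕ) :
    v r = triangularEigenvector M a r := by
  rcases lt_trichotomy r a with h | rfl | h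
  · rw [(sum_Icc_mul_eq_mul_iff h.le (hdiag r h)).1 (hrow r), triangularEigenvector_of_lt M h]
    congr 1
    refine sum_congr rfl fun b hb ↦ ?_
    have hrb : r < b := (mem_Ioc.1 hb).1
    rw [eq_triangularEigenvector hdiag hva hv hrow b]
  · rw [hva, triangularEigenvector_self]
  · rw [hv r h, triangularEigenvector_eq_zero_of_lt M h]
termination_by a - r

end

theorem eigenvector_exists_unique_general (M : ℕ → ℕ → ℂ)
    (hdist : ∀ a b : ℕ, M a a = M b b → a = b) (a : ℕ) :
    ∃! v : ℕ → ℂ, v a = 1 ∧ (∀ b : ℕ, a < b → v b = 0) ∧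
      ∀ r : ℕ, ∑ b ∈ Finset.Icc r a, M r b * v b = M a a * v r := by
  have hdiag : ∀ r < a, M r r ≠ M a a := fun r hr h ↦ hr.ne (hdist r a h)
  refine ⟨triangularEigenvector M a, ⟨triangularEigenvector_self M,
    fun b ↦ triangularEigenvector_eq_zero_of_lt M, sum_Icc_mul_triangularEigenvector hdiag⟩, ?_⟩
  rintro v ⟨hva, hv, hrow⟩
  exact funext (eq_triangularEigenvector hdiag hva hv hrow)

/-- An infinite upper triangular matrix with nonzero, pairwise distinct
diagonal entries has, for each `a`, a unique finitely supported eigenvector `v` with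
eigenvalue `M a a`, normalized by `v a = 1` and `v b = 0` for `b > a`. -/
theorem eigenvector_exists_unique (M : ℕ → ℕ → ℂ)
    (htri : ∀ a b : ℕ, b < a → M a b = 0)
    (hne : ∀ a : ℕ, M a a ≠ 0)
    (hdist : ∀ a b : ℕ, M a a = M b b → a = b) (a : ℕ) :
    ∃! v : ℕ → ℂ, v a = 1 ∧ (∀ b : ℕ, a < b → v b = 0) ∧
      ∀ r : ℕ, ∑ b ∈ Finset.Icc r a, M r b * v b = M a a * v r :=
  eigenvector_exists_unique_general M hdist a
end

section
/- Let M : ℕ → ℕ → ℂ be upper triangular (M a b = 0 whenever b < a), with all diagonal entries nonzero and pairwise distinct. Fix a ∈ ℕ, and let v : ℕ → ℂ be the unique vector with v a = 1, v b = 0 for b > a, satisfying Σ_{b ∈ [r, a]} M r b · v b = M a a · v r for all r. Then for every b < a, the component v b equals the sum, over all finite subsets S = {l_1 < l_2 < ⋯ < l_p} of integers strictly between b and a (including the empty set, p = 0), of (−1)^{p+1} times the product ∏_{j=0}^{p} M l_j l_{j+1} / (M l_j l_j − M a a), where the product is taken over the consecutive pairs of the increasing chain b = l_0 < l_1 < ⋯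 < l_p < l_{p+1} = a. -/
open Finset

/-!
Write `w x y = M x y / (M x x - M a a)`. Splitting a chain `b < l₁ < ⋯ < l_p < a` at its first
interior vertex shows that the signed chain sums `C b` on the right-hand side satisfy
`C b = -(w b a + ∑_{b < c < a} w b c * C c)`. Row `b` of the eigenvalue equation, divided by
`M b b - M a a ≠ 0`, is the same recursion for `v b`, and the recursion determines its solution
on `b < a` by induction on the length of `(b, a)`.
-/

theorem sum_powerset_Ioo_eq_add_sum_insert {α β : Type*} [LinearOrder α] [LocallyFiniteOrder α]
    [AddCommMonoid β] (f : Finset α → β) (b a : α) :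
    ∑ S ∈ (Ioo b a).powerset, f S =
      f ∅ + ∑ c ∈ Ioo b a, ∑ S ∈ (Ioo c a).powerset, f (insert c S) := by
  have isLeast_insert {c : α} {S : Finset α} (hS : S ⊆ Ioo c a) :
      IsLeast (↑(insert c S) : Set α) c :=
    ⟨mem_insert_self _ _, fun y hy => (mem_insert.mp hy).elim ge_of_eq
      fun hy => (mem_Ioo.mp (hS hy)).1.le⟩
  have notMem {c : α} {S : Finset α} (hS : S ⊆ Ioo c a) : c ∉ S := fun hc =>
    (mem_Ioo.mp (hS hc)).1.false
  rw [← sum_erase_add _ _ (empty_mem_powerset _), add_comm, sum_sigma']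
  congr 1
  refine (sum_bij (fun p _ => insert p.1 p.2) ?_ ?_ ?_ fun _ _ => rfl).symm
  · rintro ⟨c, S⟩ hp
    simp only [mem_sigma, mem_powerset] at hp
    refine mem_erase.mpr ⟨insert_ne_empty _ _, mem_powerset.mpr (insert_subset hp.1 ?_)⟩
    exact hp.2.trans (Ioo_subset_Ioo_left (mem_Ioo.mp hp.1).1.le)
  · rintro ⟨c, S⟩ hp ⟨c', S'⟩ hp' (h : insert c S = insert c' S')
    simp only [mem_sigma, mem_powerset] at hp hp'
    obtain rfl : c = c' :=
      (isLeast_insert hp.2).unique (by rw [h]; exact isLeast_insert hp'.2)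
    rw [← erase_insert (notMem hp.2), h, erase_insert (notMem hp'.2)]
  · intro S hS
    obtain ⟨hS, hsub⟩ := mem_erase.mp hS
    have hne : S.Nonempty := nonempty_iff_ne_empty.mpr hS
    have hmin := S.min'_mem hne
    refine ⟨⟨S.min' hne, S.erase (S.min' hne)⟩,
      mem_sigma.mpr ⟨mem_powerset.mp hsub hmin, ?_⟩, insert_erase hmin⟩
    refine mem_powerset.mpr fun y hy => ?_
    obtain ⟨hy, hyS⟩ := mem_erase.mp hy
    exact mem_Ioo.mpr
      ⟨(S.min'_le y hyS).lt_of_ne' hy, (mem_Ioo.mp (mem_powerset.mp hsub hyS)).2⟩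

section ChainSum

variable {α R : Type*} [CommRing R] (w : α → α → R)

def chainProd (x : α) (L : List α) : R :=
  (((x :: L).zip L).map fun p => w p.1 p.2).prod

@[simp]
theorem chainProd_nil (x : α) : chainProd w x [] = 1 := rfl

@[simp]
theorem chainProd_cons (x y : α) (L : List α) :
    chainProd w x (y :: L) = w x y * chainProd w y L := by
  simp [chainProd]

variable [LinearOrder α] [LocallyFiniteOrder α]

def chainSum (b a : α) : R :=
  ∑ S ∈ (Ioo b a).powerset, (-1) ^ (S.card + 1) * chainProd w b (S.sort (· ≤ ·) ++ [a])

theorem chainSum_eq_neg_add_sum (b a : α) :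
    chainSum w b a = -(w b a + ∑ c ∈ Ioo b a, w b c * chainSum w c a) := by
  have insert_term : ∀ c ∈ Ioo b a, ∀ S ∈ (Ioo c a).powerset,
      (-1 : R) ^ ((insert c S).card + 1) * chainProd w b ((insert c S).sort (· ≤ ·) ++ [a]) =
        -(w b c * ((-1) ^ (S.card + 1) * chainProd w c (S.sort (· ≤ ·) ++ [a]))) := by
    intro c _ S hS
    have hlt : ∀ y ∈ S, c < y := fun y hy => (mem_Ioo.mp (mem_powerset.mp hS hy)).1
    have hc : c ∉ S := fun hc => (hlt c hc).false
    rw [card_insert_of_notMem hc, sort_insert _ (fun y hy => (hlt y hy).le) hc,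
      List.cons_append, chainProd_cons]
    ring
  rw [chainSum, sum_powerset_Ioo_eq_add_sum_insert, sum_congr rfl fun c hc =>
    (sum_congr rfl (insert_term c hc)).trans (by rw [sum_neg_distrib, ← mul_sum])]
  simp only [card_empty, sort_empty, List.nil_append, chainProd_cons, chainProd_nil,
    sum_neg_distrib, chainSum]
  ring

theorem eq_chainSum_of_forall_lt {v : α → R} {a : α}
    (hv : ∀ b < a, v b = -(w b a + ∑ c ∈ Ioo b a, w b c * v c)) :
    ∀ b < a, v b = chainSum w b a := by
  intro b
  induction hn : (Ioo b a).card using Nat.strong_induction_on generalizing b with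
  | _ n ih =>
    intro hb
    rw [hv b hb, chainSum_eq_neg_add_sum]
    congr 2
    refine sum_congr rfl fun c hc => ?_
    obtain ⟨hbc, hca⟩ := mem_Ioo.mp hc
    have hshorter : (Ioo c a).card < n :=
      hn ▸ card_lt_card ⟨Ioo_subset_Ioo_left hbc.le, fun h => (mem_Ioo.mp (h hc)).1.false⟩
    rw [ih _ hshorter c rfl hca]

end ChainSum

theorem eq_neg_add_sum_of_sum_Icc_mul_eq {α K : Type*} [LinearOrder α] [LocallyFiniteOrder α]
    [Field K] {M : α → α → K} {v : α → K} {μ : K} {b a : α} (hba : b < a) (hμ : M b b ≠ μ)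
    (hva : v a = 1) (hrow : ∑ c ∈ Icc b a, M b c * v c = μ * v b) :
    v b = -(M b a / (M b b - μ) + ∑ c ∈ Ioo b a, M b c / (M b b - μ) * v c) := by
  rw [← Ioc_insert_left hba.le, sum_insert left_notMem_Ioc, ← Ioo_insert_right hba,
    sum_insert right_notMem_Ioo, hva] at hrow
  have hμ' : M b b - μ ≠ 0 := sub_ne_zero.mpr hμ
  simp only [div_mul_eq_mul_div, ← sum_div]
  field_simp
  linear_combination hrow

theorem eigenvector_back_substitution_general (M : ℕ → ℕ → ℂ)
    (hdist : ∀ a b : ℕ, M a a = M b b → a = b)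
    (a : ℕ) (v : ℕ → ℂ) (hva : v a = 1)
    (heig : ∀ r : ℕ, ∑ b ∈ Finset.Icc r a, M r b * v b = M a a * v r) :
    ∀ b : ℕ, b < a →
      v b = ∑ S ∈ (Finset.Ioo b a).powerset,
        (-1 : ℂ) ^ (S.card + 1) *
          (((b :: (S.sort (· ≤ ·) ++ [a])).zip (S.sort (· ≤ ·) ++ [a])).map
            (fun p => M p.1 p.2 / (M p.1 p.1 - M a a))).prod :=
  eq_chainSum_of_forall_lt (fun x y => M x y / (M x x - M a a)) fun b hb =>
    eq_neg_add_sum_of_sum_Icc_mul_eq hb (fun h => hb.ne' (hdist a b h.symm)) hva (heig b)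

/-- Back-substitution formula for the components of the eigenvector of
an infinite upper triangular matrix `M` with distinct nonzero diagonal entries
corresponding to eigenvalue `M a a`: for `b < a`,
`v b = ∑_{S = {l₁ < ⋯ < l_p} ⊆ (b, a)} (−1)^{p+1} ∏_{j=0}^{p} M l_j l_{j+1} / (M l_j l_j − M a a)`,
the product running over consecutive pairs of the chain `b = l₀ < l₁ < ⋯ < l_p < l_{p+1} = a`. -/
theorem eigenvector_back_substitution (M : ℕ → ℕ → ℂ)
    (htri : ∀ a b : ℕ, b < a → M a b = 0)
    (hne : ∀ a : ℕ, M a a ≠ 0)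
    (hdist : ∀ a b : ℕ, M a a = M b b → a = b)
    (a : ℕ) (v : ℕ → ℂ) (hva : v a = 1) (hv0 : ∀ b : ℕ, a < b → v b = 0)
    (heig : ∀ r : ℕ, ∑ b ∈ Finset.Icc r a, M r b * v b = M a a * v r) :
    ∀ b : ℕ, b < a →
      v b = ∑ S ∈ (Finset.Ioo b a).powerset,
        (-1 : ℂ) ^ (S.card + 1) *
          (((b :: (S.sort (· ≤ ·) ++ [a])).zip (S.sort (· ≤ ·) ++ [a])).map
            (fun p => M p.1 p.2 / (M p.1 p.1 - M a a))).prod :=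
  eigenvector_back_substitution_general M hdist a v hva heig
end

section
/- Let U : ℕ → ℕ → ℂ be upper triangular (U a b = 0 whenever b < a) with U n n ≠ 0 for all n, and let V be its (two-sided, upper triangular) inverse, i.e. the unique upper triangular matrix with Σ_{k ∈ [i, j]} U i k · V k j = δ_{ij} for all i ≤ j. Then for every i < j, V i j equals (U j j)⁻¹ times the sum, over all finite subsets S = {l_1 < l_2 < ⋯ < l_p} of integers strictly between i and j (including the empty set, p = 0), of (−1)^{p+1} times the product ∏_{t=0}^{p} U l_t l_{t+1} / U l_t l_t, where the product is over consecutive pairs of the increasing chain i = l_0 < l_1 < ⋯ < l_p < l_{p+1} = j. -/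
/-!
Write `w a b = U a b / U a a`. Dividing the `(i, j)` entry of `U V = 1` by `U i i` shows that
`W i j := V i j * U j j` satisfies `W i j = -w i j - ∑_{i < k < j} w i k * W k j` for `i < j`.
The alternating sum over chains `i < l₁ < ⋯ < l_p < j` satisfies the same recurrence: split off
the smallest element `l₁ = k` of a nonempty chain, which flips the sign and leaves a chain from `k`
to `j`. Induction on `j - i` identifies the two.
-/

open Finset

theorem Finset.min'_insert_of_forall_lt {α : Type*} [LinearOrder α] {a : α} {s : Finset α}
    (h : ∀ b ∈ s, a < b) : (insert a s).min' (insert_nonempty a s) = a :=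
  (isLeast_min' _ _).unique
    ⟨mem_insert_self a s, forall_mem_insert _ _ _ |>.2 ⟨le_rfl, fun b hb => (h b hb).le⟩⟩

theorem Finset.sum_powerset_Ioo_erase_empty {α β : Type*} [LinearOrder α] [LocallyFiniteOrder α]
    [AddCommMonoid β] (a b : α) (f : Finset α → β) :
    ∑ S ∈ (Ioo a b).powerset.erase ∅, f S =
      ∑ k ∈ Ioo a b, ∑ S ∈ (Ioo k b).powerset, f (insert k S) := by
  rw [sum_sigma']
  symm
  refine sum_nbij' (fun p => insert p.1 p.2)
    (fun S => if h : S.Nonempty then ⟨S.min' h, S.erase (S.min' h)⟩ else ⟨a, ∅⟩)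
    ?_ ?_ ?_ ?_ fun _ _ => rfl
  · rintro ⟨k, S⟩ hkS
    simp only [mem_sigma, mem_powerset] at hkS
    simp only [mem_erase, mem_powerset]
    exact ⟨insert_ne_empty k S, insert_subset hkS.1 <|
      hkS.2.trans (Ioo_subset_Ioo_left (mem_Ioo.1 hkS.1).1.le)⟩
  · intro S hS
    simp only [mem_erase, mem_powerset] at hS
    have hne : S.Nonempty := nonempty_iff_ne_empty.2 hS.1
    simp only [dif_pos hne, mem_sigma, mem_powerset]
    refine ⟨hS.2 (min'_mem S hne), fun x hx => ?_⟩
    obtain ⟨hxmin, hxS⟩ := mem_erase.1 hx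
    exact mem_Ioo.2 ⟨lt_of_le_of_ne (min'_le S x hxS) (Ne.symm hxmin), (mem_Ioo.1 (hS.2 hxS)).2⟩
  · rintro ⟨k, S⟩ hkS
    simp only [mem_sigma, mem_powerset] at hkS
    have hlt : ∀ x ∈ S, k < x := fun x hx => (mem_Ioo.1 (hkS.2 hx)).1
    have hmin := min'_insert_of_forall_lt hlt
    simp only [dif_pos (insert_nonempty k S)]
    refine Sigma.ext hmin ?_
    rw [hmin, erase_insert fun hk => lt_irrefl k (hlt k hk)]
  · intro S hS
    have hne : S.Nonempty := nonempty_iff_ne_empty.2 (mem_erase.1 hS).1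
    simp only [dif_pos hne]
    exact insert_erase (min'_mem S hne)

section PathSum

variable {R : Type*}

def pathWeight [CommMonoid R] (w : ℕ → ℕ → R) (i : ℕ) (S : Finset ℕ) (j : ℕ) : R :=
  (((i :: (S.sort (· ≤ ·) ++ [j])).zip (S.sort (· ≤ ·) ++ [j])).map fun p => w p.1 p.2).prod

theorem pathWeight_empty [CommMonoid R] (w : ℕ → ℕ → R) (i j : ℕ) :
    pathWeight w i ∅ j = w i j := by
  simp [pathWeight]

theorem pathWeight_insert [CommMonoid R] (w : ℕ → ℕ → R) {i k j : ℕ} {S : Finset ℕ}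
    (hS : ∀ b ∈ S, k < b) :
    pathWeight w i (insert k S) j = w i k * pathWeight w k S j := by
  rw [pathWeight, sort_insert _ (fun b hb => (hS b hb).le) fun hk => lt_irrefl k (hS k hk)]
  rfl

def alternatingPathSum [CommRing R] (w : ℕ → ℕ → R) (i j : ℕ) : R :=
  ∑ S ∈ (Ioo i j).powerset, (-1) ^ (S.card + 1) * pathWeight w i S j

theorem alternatingPathSum_eq [CommRing R] (w : ℕ → ℕ → R) (i j : ℕ) :
    alternatingPathSum w i j = -w i j - ∑ k ∈ Ioo i j, w i k * alternatingPathSum w k j := by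
  rw [alternatingPathSum, ← add_sum_erase _ _ (empty_mem_powerset _),
    sum_powerset_Ioo_erase_empty, sub_eq_add_neg, ← sum_neg_distrib]
  congr 1
  · simp [pathWeight_empty]
  refine sum_congr rfl fun k _ => ?_
  rw [alternatingPathSum, mul_sum, ← sum_neg_distrib]
  refine sum_congr rfl fun S hS => ?_
  have hkS : ∀ b ∈ S, k < b := fun b hb => (mem_Ioo.1 (mem_powerset.1 hS hb)).1
  rw [pathWeight_insert w hkS, card_insert_of_notMem fun hk => lt_irrefl k (hkS k hk)]
  ring

theorem eq_alternatingPathSum_of_recurrence [CommRing R] {w f : ℕ → ℕ → R}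
    (hf : ∀ i j, i < j → f i j = -w i j - ∑ k ∈ Ioo i j, w i k * f k j) {i j : ℕ} (hij : i < j) :
    f i j = alternatingPathSum w i j := by
  rw [hf i j hij, alternatingPathSum_eq w i j]
  congr 1
  refine sum_congr rfl fun k hk => ?_
  rw [eq_alternatingPathSum_of_recurrence hf (mem_Ioo.1 hk).2]
termination_by j - i
decreasing_by have := (mem_Ioo.1 hk).1; omega

end PathSum

theorem mul_diag_eq_of_sum_Icc_mul_eq_ite {K : Type*} [Field K] {U V : ℕ → ℕ → K}
    (hne : ∀ n, U n n ≠ 0)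
    (hinv : ∀ i j : ℕ, i ≤ j → ∑ k ∈ Icc i j, U i k * V k j = if i = j then 1 else 0)
    {i j : ℕ} (hij : i < j) :
    V i j * U j j = -(U i j / U i i) - ∑ k ∈ Ioo i j, U i k / U i i * (V k j * U j j) := by
  have hdiag : V j j * U j j = 1 := by
    simpa [mul_comm] using hinv j j le_rfl
  have hrow := hinv i j hij.le
  rw [if_neg hij.ne, Icc_eq_cons_Ioc hij.le, sum_cons, Ioc_eq_cons_Ioo hij, sum_cons] at hrow
  have hsum : ∑ k ∈ Ioo i j, U i k / U i i * (V k j * U j j) =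
      (U i i)⁻¹ * U j j * ∑ k ∈ Ioo i j, U i k * V k j := by
    rw [mul_sum]
    exact sum_congr rfl fun k _ => by ring
  rw [hsum]
  field_simp [hne i]
  linear_combination U j j * hrow - U i j * hdiag

theorem upper_triangular_inverse_entries_general (U V : ℕ → ℕ → ℂ)
    (hne : ∀ n : ℕ, U n n ≠ 0)
    (hinv : ∀ i j : ℕ, i ≤ j →
      ∑ k ∈ Finset.Icc i j, U i k * V k j = if i = j then 1 else 0) :
    ∀ i j : ℕ, i < j →
      V i j = (U j j)⁻¹ *
        ∑ S ∈ (Finset.Ioo i j).powerset,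
          (-1 : ℂ) ^ (S.card + 1) *
            (((i :: (S.sort (· ≤ ·) ++ [j])).zip (S.sort (· ≤ ·) ++ [j])).map
              (fun p => U p.1 p.2 / U p.1 p.1)).prod := by
  intro i j hij
  have hV : V i j * U j j = alternatingPathSum (fun a b => U a b / U a a) i j :=
    eq_alternatingPathSum_of_recurrence
      (fun _ _ hab => mul_diag_eq_of_sum_Icc_mul_eq_ite hne hinv hab) hij
  change V i j = (U j j)⁻¹ * alternatingPathSum (fun a b => U a b / U a a) i j
  rw [← hV, eq_inv_mul_iff_mul_eq₀ (hne j), mul_comm]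

/-- Explicit formula for the entries of the (upper triangular) inverse
`V` of an infinite upper triangular matrix `U` with nonzero diagonal: for `i < j`,
`V i j = (U j j)⁻¹ ∑_{S = {l₁ < ⋯ < l_p} ⊆ (i, j)} (−1)^{p+1} ∏_{t=0}^{p} U l_t l_{t+1} / U l_t l_t`,
the product running over consecutive pairs of the chain `i = l₀ < l₁ < ⋯ < l_p < l_{p+1} = j`. -/
theorem upper_triangular_inverse_entries (U V : ℕ → ℕ → ℂ)
    (htriU : ∀ a b : ℕ, b < a → U a b = 0)
    (hne : ∀ n : ℕ, U n n ≠ 0)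
    (htriV : ∀ a b : ℕ, b < a → V a b = 0)
    (hinv : ∀ i j : ℕ, i ≤ j →
      ∑ k ∈ Finset.Icc i j, U i k * V k j = if i = j then 1 else 0) :
    ∀ i j : ℕ, i < j →
      V i j = (U j j)⁻¹ *
        ∑ S ∈ (Finset.Ioo i j).powerset,
          (-1 : ℂ) ^ (S.card + 1) *
            (((i :: (S.sort (· ≤ ·) ++ [j])).zip (S.sort (· ≤ ·) ++ [j])).map
              (fun p => U p.1 p.2 / U p.1 p.1)).prod :=
  upper_triangular_inverse_entries_general U V hne hinv
end

section
/- Let F be a polynomial over ℂ with F.coeff 0 = 0, let c₁ = F.coeff 1, and assume the powers of c₁ are pairwise distinct (for all m, n ∈ ℕ, c₁^m = c₁^n implies m = n). Let T a b = coefficient of X^b in F^a be the Carleman transition matrix of F, and define the iterates F^{∘0} = X, F^{∘(i+1)} = F^{∘i} ∘ F. Then there exist upper triangular matrices P, Q : ℕ → ℕ → ℂ with P n n = 1 and Q n n = 1 for all n, such that: (i) Q is the inverse of P, i.e. Σ_{k ∈ [i, j]} P i k · Q k j = δ_{ij} for all i ≤ j; (ii) the columns of P are eigenvectors of T: for all r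 ≤ j, Σ_{b ∈ [r, j]} T r b · P b j = c₁^j · P r j; and (iii) for every i ∈ ℕ and every l ≥ 1, the coefficient of X^l in the i-th iterate F^{∘i} equals Σ_{j=1}^{l} P 1 j · c₁^{i·j} · Q j l. -/
/-!
The Carleman matrix `T` is upper triangular with diagonal `c₁ ^ n`, and these entries are pairwise
distinct, so back substitution yields unitriangular `P` and `Q` whose columns, resp. rows, are
right, resp. left, eigenvectors of `T`. Evaluating `Q T P` in two ways shows that `Q P` commutes
with `diag (c₁ ^ n)`, hence `Q P = 1`; then `P Q` is an idempotent unitriangular matrix, hence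
`P Q = 1` as well. Finally, the coefficients of `p.comp F` in positive degrees form the row
vector of `p` times `T`, so by `Q T = diag (c₁ ^ n) Q` the coefficients of `F^{∘i}` form row `1`
of `P diag (c₁ ^ (i j)) Q`.
-/

open Finset

section TriangularProduct

variable {R : Type*}

def triMul [Semiring R] (U V : ℕ → ℕ → R) (i j : ℕ) : R := ∑ k ∈ Icc i j, U i k * V k j

def triOne [Zero R] [One R] (i j : ℕ) : R := if i = j then 1 else 0

def IsUpperTriangular [Zero R] (U : ℕ → ℕ → R) : Prop := ∀ ⦃i j : ℕ⦄, j < i → U i j = 0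

-- No triangularity is needed: both sides sum over the chains `i ≤ m ≤ k ≤ j`.
theorem triMul_assoc [Semiring R] (U V W : ℕ → ℕ → R) :
    triMul (triMul U V) W = triMul U (triMul V W) := by
  ext i j
  simp only [triMul, sum_mul, mul_sum, mul_assoc]
  exact sum_comm' fun k m => by simp only [mem_Icc]; omega

theorem isUpperTriangular_triMul [Semiring R] (U V : ℕ → ℕ → R) :
    IsUpperTriangular (triMul U V) := fun i j hji => by
  rw [triMul, Icc_eq_empty_of_lt hji, sum_empty]

theorem triMul_self [Semiring R] (U V : ℕ → ℕ → R) (n : ℕ) :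
    triMul U V n n = U n n * V n n := by
  rw [triMul, Icc_self, sum_singleton]

theorem triOne_triMul [Semiring R] {V : ℕ → ℕ → R} (hV : IsUpperTriangular V) :
    triMul triOne V = V := by
  ext i j
  rcases le_or_gt i j with hij | hji
  · rw [triMul, sum_eq_single_of_mem i (left_mem_Icc.2 hij) fun k _ hki => by
      simp [triOne, hki.symm]]
    simp [triOne]
  · rw [isUpperTriangular_triMul _ _ hji, hV hji]

theorem eq_triOne_of_triMul_self_eq [Ring R] {M : ℕ → ℕ → R} (hM : IsUpperTriangular M)
    (hdiag : ∀ n, M n n = 1) (hidem : triMul M M = M) : M = triOne := by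
  have hoff : ∀ i j, i < j → M i j = 0 := by
    intro i j
    induction j using Nat.strong_induction_on with
    | _ j ih =>
      intro hij
      have h := congrFun₂ hidem i j
      rw [triMul, sum_eq_add_of_mem i j (left_mem_Icc.2 hij.le) (right_mem_Icc.2 hij.le) hij.ne
        fun k hk hkij => by
          rw [mem_Icc] at hk
          rw [ih k (by omega) (by omega), zero_mul], hdiag, hdiag, one_mul, mul_one] at h
      simpa using h
  ext i j
  rcases lt_trichotomy i j with hij | rfl | hji
  · simp [triOne, hoff i j hij, hij.ne]
  · simp [triOne, hdiag]
  · simp [triOne, hM hji, hji.ne']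

theorem triMul_eq_triOne_of_triMul_eq_triOne [Ring R] {P Q : ℕ → ℕ → R}
    (hQ : IsUpperTriangular Q) (hPdiag : ∀ n, P n n = 1) (hQdiag : ∀ n, Q n n = 1)
    (hQP : triMul Q P = triOne) : triMul P Q = triOne := by
  refine eq_triOne_of_triMul_self_eq (isUpperTriangular_triMul P Q)
    (fun n => by rw [triMul_self, hPdiag, hQdiag, one_mul]) ?_
  rw [triMul_assoc, ← triMul_assoc Q, hQP, triOne_triMul hQ]

theorem triMul_eq_triOne_of_eigen [CommRing R] [NoZeroDivisors R] {T P Q : ℕ → ℕ → R}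
    (hinj : Function.Injective fun n => T n n)
    (hP : ∀ i j, triMul T P i j = T j j * P i j) (hQ : ∀ i j, triMul Q T i j = T i i * Q i j)
    (hPdiag : ∀ n, P n n = 1) (hQdiag : ∀ n, Q n n = 1) : triMul Q P = triOne := by
  ext i j
  have hcomm : T i i * triMul Q P i j = T j j * triMul Q P i j := calc
    T i i * triMul Q P i j = triMul (triMul Q T) P i j := by
      rw [triMul, triMul, mul_sum]
      simp only [hQ, mul_assoc]
    _ = triMul Q (triMul T P) i j := by rw [triMul_assoc]
    _ = T j j * triMul Q P i j := by
      rw [triMul, triMul, mul_sum]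
      simp only [hP, mul_left_comm]
  by_cases hij : i = j
  · subst hij
    rw [triMul_self, hPdiag, hQdiag, one_mul, triOne, if_pos rfl]
  · rw [triOne, if_neg hij]
    have hne : T i i - T j j ≠ 0 := sub_ne_zero.2 (hinj.ne hij)
    exact (mul_eq_zero.1 (by linear_combination hcomm)).resolve_left hne

theorem triMul_triMul_of_eigen [CommSemiring R] {Q T : ℕ → ℕ → R}
    (hQ : ∀ i j, triMul Q T i j = T i i * Q i j) (U : ℕ → ℕ → R) :
    triMul (triMul U Q) T = triMul (fun i j => U i j * T j j) Q := by
  ext i j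
  rw [triMul_assoc, triMul, triMul]
  simp only [hQ, mul_assoc]

end TriangularProduct

section Eigenvectors

variable {K : Type*} [Field K]

-- Back substitution in `(T - T j j) P(·, j) = 0` and `Q(j, ·) (T - T j j) = 0`, normalized by
-- `P j j = Q j j = 1`; the denominators are nonzero when the diagonal of `T` is injective.
noncomputable def rightEigenvectors (T : ℕ → ℕ → K) (r j : ℕ) : K :=
  if r < j then
    (∑ b ∈ (Ioc r j).attach, T r b * rightEigenvectors T b j) / (T j j - T r r)
  else if r = j then 1 else 0
termination_by j - r
decreasing_by have := mem_Ioc.1 b.2; omega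

noncomputable def leftEigenvectors (T : ℕ → ℕ → K) (j l : ℕ) : K :=
  if j < l then
    (∑ m ∈ (Ico j l).attach, leftEigenvectors T j m * T m l) / (T j j - T l l)
  else if j = l then 1 else 0
termination_by l
decreasing_by exact (mem_Ico.1 m.2).2

variable (T : ℕ → ℕ → K)

theorem rightEigenvectors_of_lt {r j : ℕ} (h : r < j) :
    rightEigenvectors T r j =
      (∑ b ∈ Ioc r j, T r b * rightEigenvectors T b j) / (T j j - T r r) := by
  rw [rightEigenvectors, if_pos h, sum_attach (Ioc r j) fun b => T r b * rightEigenvectors T b j]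

theorem leftEigenvectors_of_lt {j l : ℕ} (h : j < l) :
    leftEigenvectors T j l =
      (∑ m ∈ Ico j l, leftEigenvectors T j m * T m l) / (T j j - T l l) := by
  rw [leftEigenvectors, if_pos h, sum_attach (Ico j l) fun m => leftEigenvectors T j m * T m l]

theorem rightEigenvectors_self (n : ℕ) : rightEigenvectors T n n = 1 := by
  simp [rightEigenvectors]

theorem leftEigenvectors_self (n : ℕ) : leftEigenvectors T n n = 1 := by
  simp [leftEigenvectors]

theorem isUpperTriangular_rightEigenvectors : IsUpperTriangular (rightEigenvectors T) :=
  fun i j hji => by simp [rightEigenvectors, hji.not_gt, hji.ne']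

theorem isUpperTriangular_leftEigenvectors : IsUpperTriangular (leftEigenvectors T) :=
  fun i j hji => by simp [leftEigenvectors, hji.not_gt, hji.ne']

variable {T}

theorem triMul_rightEigenvectors (hinj : Function.Injective fun n => T n n) (r j : ℕ) :
    triMul T (rightEigenvectors T) r j = T j j * rightEigenvectors T r j := by
  rcases lt_trichotomy r j with hrj | rfl | hjr
  · have hne : T j j - T r r ≠ 0 := sub_ne_zero.2 (hinj.ne hrj.ne')
    rw [triMul, Icc_eq_cons_Ioc hrj.le, sum_cons, rightEigenvectors_of_lt T hrj]
    field_simp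
    ring
  · rw [triMul_self, rightEigenvectors_self, mul_comm]
  · rw [isUpperTriangular_triMul _ _ hjr, isUpperTriangular_rightEigenvectors T hjr, mul_zero]

theorem leftEigenvectors_triMul (hinj : Function.Injective fun n => T n n) (j l : ℕ) :
    triMul (leftEigenvectors T) T j l = T j j * leftEigenvectors T j l := by
  rcases lt_trichotomy j l with hjl | rfl | hlj
  · have hne : T j j - T l l ≠ 0 := sub_ne_zero.2 (hinj.ne hjl.ne)
    rw [triMul, Icc_eq_cons_Ico hjl.le, sum_cons, leftEigenvectors_of_lt T hjl]
    field_simp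
    ring
  · rw [triMul_self, leftEigenvectors_self, mul_comm]
  · rw [isUpperTriangular_triMul _ _ hlj, isUpperTriangular_leftEigenvectors T hlj, mul_zero]

theorem triMul_rightEigenvectors_leftEigenvectors (hinj : Function.Injective fun n => T n n) :
    triMul (rightEigenvectors T) (leftEigenvectors T) = triOne :=
  triMul_eq_triOne_of_triMul_eq_triOne (isUpperTriangular_leftEigenvectors T)
    (rightEigenvectors_self T) (leftEigenvectors_self T)
    (triMul_eq_triOne_of_eigen hinj (triMul_rightEigenvectors hinj)
      (leftEigenvectors_triMul hinj) (rightEigenvectors_self T) (leftEigenvectors_self T))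

end Eigenvectors

namespace Polynomial

variable {R : Type*} [CommSemiring R] {F : R[X]}

theorem coeff_pow_of_lt_of_coeff_zero_eq_zero (h0 : F.coeff 0 = 0) {a b : ℕ} (hba : b < a) :
    (F ^ a).coeff b = 0 :=
  X_pow_dvd_iff.1 (pow_dvd_pow_of_dvd (X_dvd_iff.2 h0) a) b hba

theorem coeff_pow_self_of_coeff_zero_eq_zero (h0 : F.coeff 0 = 0) (a : ℕ) :
    (F ^ a).coeff a = F.coeff 1 ^ a := by
  obtain ⟨G, rfl⟩ := X_dvd_iff.2 h0
  rw [mul_pow, coeff_X_pow_mul', if_pos le_rfl, Nat.sub_self, coeff_zero_eq_eval_zero,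
    eval_pow, ← coeff_zero_eq_eval_zero, coeff_X_mul]

theorem coeff_comp_eq_sum_Icc (p : R[X]) (h0 : F.coeff 0 = 0) {l : ℕ} (hl : 1 ≤ l) :
    (p.comp F).coeff l = ∑ m ∈ Icc 1 l, p.coeff m * (F ^ m).coeff l := by
  have hN : p.natDegree < p.natDegree + l + 1 := by omega
  rw [comp, eval₂_eq_sum_range' C hN, finsetSum_coeff]
  simp only [coeff_C_mul]
  refine (sum_subset (fun m hm => by simp only [mem_Icc, mem_range] at hm ⊢; omega) ?_).symm
  intro m _ hm
  rw [mem_Icc, not_and_or, not_le, not_le] at hm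
  rcases hm with hm | hm
  · rw [Nat.lt_one_iff.1 hm, pow_zero, coeff_one, if_neg (by omega), mul_zero]
  · rw [coeff_pow_of_lt_of_coeff_zero_eq_zero h0 hm, mul_zero]

end Polynomial

/-- Diagonalization of the Carleman transition matrix and the solution
of a uni-variable depth-one polynomial recurrence: if `F.coeff 0 = 0` and the powers of
`c₁ = F.coeff 1` are pairwise distinct, then there are upper triangular unitriangular
matrices `P` (modal matrix of eigenvectors of `T`) and `Q = P⁻¹` such that the
coefficients of the iterates of `F` satisfy
`(F^{∘i}).coeff l = ∑_{j=1}^{l} P 1 j · c₁^{i·j} · Q j l` for `l ≥ 1`. -/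
theorem carleman_diagonalization_solves_recurrence (F : Polynomial ℂ)
    (h0 : F.coeff 0 = 0) (c₁ : ℂ) (hc₁ : c₁ = F.coeff 1)
    (hdist : ∀ m n : ℕ, c₁ ^ m = c₁ ^ n → m = n)
    (T : ℕ → ℕ → ℂ) (hT : ∀ a b : ℕ, T a b = (F ^ a).coeff b)
    (Fiter : ℕ → Polynomial ℂ) (hFiter0 : Fiter 0 = Polynomial.X)
    (hFiterS : ∀ i : ℕ, Fiter (i + 1) = (Fiter i).comp F) :
    ∃ P Q : ℕ → ℕ → ℂ,
      (∀ a b : ℕ, b < a → P a b = 0) ∧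
      (∀ a b : ℕ, b < a → Q a b = 0) ∧
      (∀ n : ℕ, P n n = 1) ∧
      (∀ n : ℕ, Q n n = 1) ∧
      (∀ i j : ℕ, i ≤ j →
        ∑ k ∈ Finset.Icc i j, P i k * Q k j = if i = j then 1 else 0) ∧
      (∀ r j : ℕ, r ≤ j →
        ∑ b ∈ Finset.Icc r j, T r b * P b j = c₁ ^ j * P r j) ∧
      (∀ i l : ℕ, 1 ≤ l →
        (Fiter i).coeff l = ∑ j ∈ Finset.Icc 1 l, P 1 j * c₁ ^ (i * j) * Q j l) := by
  have hdiag : ∀ n, T n n = c₁ ^ n := fun n => by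
    rw [hT, hc₁, Polynomial.coeff_pow_self_of_coeff_zero_eq_zero h0]
  have hinj : Function.Injective fun n => T n n := fun m n h =>
    hdist m n (by simpa [hdiag] using h)
  have hPQ := triMul_rightEigenvectors_leftEigenvectors hinj
  refine ⟨rightEigenvectors T, leftEigenvectors T, isUpperTriangular_rightEigenvectors T,
    isUpperTriangular_leftEigenvectors T, rightEigenvectors_self T, leftEigenvectors_self T,
    fun i j _ => congrFun₂ hPQ i j,
    fun r j _ => hdiag j ▸ triMul_rightEigenvectors hinj r j, fun i => ?_⟩
  induction i with
  | zero =>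
    intro l _
    rw [hFiter0, Polynomial.coeff_X]
    simp only [zero_mul, pow_zero, mul_one]
    exact (congrFun₂ hPQ 1 l).symm
  | succ i ih =>
    intro l hl
    have hcoeff : ∀ m ∈ Icc 1 l, (Fiter i).coeff m * (F ^ m).coeff l =
        triMul (fun a j => rightEigenvectors T a j * c₁ ^ (i * j)) (leftEigenvectors T) 1 m *
          T m l := fun m hm => by
      rw [ih m (mem_Icc.1 hm).1, hT]; rfl
    rw [hFiterS, Polynomial.coeff_comp_eq_sum_Icc _ h0 hl, sum_congr rfl hcoeff]
    change triMul (triMul _ (leftEigenvectors T)) T 1 l = _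
    rw [triMul_triMul_of_eigen (leftEigenvectors_triMul hinj)]
    simp only [triMul, hdiag, mul_assoc, ← pow_add, Nat.succ_mul]
end

section
/- Let r ∈ ℂ and let F = r·X − r·X² be the logistic polynomial, with iterates F^{∘0} = X and F^{∘(i+1)} = F^{∘i} ∘ F. Then for every i ∈ ℕ: (1) the coefficient of X in F^{∘i} equals r^i; (2) if r ≠ 1, the coefficient of X² in F^{∘i} equals (r^i − r^{2i})/(r − 1); (3) if moreover r ≠ −1, the coefficient of X³ in F^{∘i} equals (2r·r^i − 2(r+1)·r^{2i} + 2·r^{3i})/(r³ − r² − r + 1). -/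
/-!
Since the iterates of `F` commute with `F`, the `i`-th iterate is also `F ∘ F^{∘(i-1)}`, so its
coefficients `a_i, b_i, c_i` of `X, X², X³` obey the logistic recurrence truncated at degree 3:
as `F^{∘(i-1)}` has no constant term, `a_i = r a_{i-1}`, `b_i = r b_{i-1} - r a_{i-1}²` and
`c_i = r c_{i-1} - 2 r a_{i-1} b_{i-1}`. The closed forms, multiplied out by their denominators,
then follow by induction on `i`.
-/

open Polynomial

namespace Polynomial

variable {R : Type*}

section Semiring
variable [CommSemiring R] {p : R[X]}

theorem coeff_sq_one_of_coeff_zero (hp : p.coeff 0 = 0) : (p ^ 2).coeff 1 = 0 := by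
  simp [pow_two, coeff_mul, Finset.Nat.antidiagonal_succ, hp]

theorem coeff_sq_two_of_coeff_zero (hp : p.coeff 0 = 0) : (p ^ 2).coeff 2 = p.coeff 1 ^ 2 := by
  simp [pow_two, coeff_mul, Finset.Nat.antidiagonal_succ, hp]

theorem coeff_sq_three_of_coeff_zero (hp : p.coeff 0 = 0) :
    (p ^ 2).coeff 3 = 2 * p.coeff 1 * p.coeff 2 := by
  simp [pow_two, coeff_mul, Finset.Nat.antidiagonal_succ, hp]; ring

theorem comp_iterate_X_of_succ {F : R[X]} {P : ℕ → R[X]} (h0 : P 0 = X)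
    (hS : ∀ i, P (i + 1) = (P i).comp F) (i : ℕ) : P i = F.comp^[i] X := by
  have hcomm : Function.Commute F.comp (·.comp F) := fun p => (comp_assoc F p F).symm
  induction i with
  | zero => exact h0
  | succ i ih =>
    rw [hS, ih, ← (hcomm.iterate_left i).eq, X_comp, Function.iterate_succ_apply, comp_X]

end Semiring

section Logistic
variable [CommRing R] (r : R)

noncomputable def logistic : R[X] := C r * X - C r * X ^ 2

theorem coeff_logistic_comp (p : R[X]) (n : ℕ) :
    ((logistic r).comp p).coeff n = r * p.coeff n - r * (p ^ 2).coeff n := by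
  simp [logistic]

/-- `logisticIterate r i` is `u_i` as a polynomial in the initial value `u_0`. -/
noncomputable def logisticIterate (i : ℕ) : R[X] := (logistic r).comp^[i] X

theorem logisticIterate_succ (i : ℕ) :
    logisticIterate r (i + 1) = (logistic r).comp (logisticIterate r i) :=
  Function.iterate_succ_apply' _ _ _

theorem coeff_zero_logisticIterate (i : ℕ) : (logisticIterate r i).coeff 0 = 0 := by
  induction i with
  | zero => simp [logisticIterate]
  | succ i ih =>
    rw [coeff_zero_eq_eval_zero] at ih ⊢
    simp [logisticIterate_succ, ih, logistic]

theorem coeff_one_logisticIterate (i : ℕ) : (logisticIterate r i).coeff 1 = r ^ i := by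
  induction i with
  | zero => simp [logisticIterate]
  | succ i ih =>
    rw [logisticIterate_succ, coeff_logistic_comp, ih,
      coeff_sq_one_of_coeff_zero (coeff_zero_logisticIterate r i)]
    ring

theorem sub_one_mul_coeff_two_logisticIterate (i : ℕ) :
    (r - 1) * (logisticIterate r i).coeff 2 = r ^ i - r ^ (2 * i) := by
  induction i with
  | zero => simp [logisticIterate, coeff_X]
  | succ i ih =>
    rw [logisticIterate_succ, coeff_logistic_comp,
      coeff_sq_two_of_coeff_zero (coeff_zero_logisticIterate r i), coeff_one_logisticIterate]
    linear_combination r * ih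

theorem mul_coeff_three_logisticIterate (i : ℕ) :
    (r ^ 3 - r ^ 2 - r + 1) * (logisticIterate r i).coeff 3 =
      2 * r * r ^ i - 2 * (r + 1) * r ^ (2 * i) + 2 * r ^ (3 * i) := by
  induction i with
  | zero => simp [logisticIterate, coeff_X]; ring
  | succ i ih =>
    rw [logisticIterate_succ, coeff_logistic_comp,
      coeff_sq_three_of_coeff_zero (coeff_zero_logisticIterate r i), coeff_one_logisticIterate]
    linear_combination r * ih - 2 * r ^ (i + 1) * (r - 1) * (r + 1) *
      sub_one_mul_coeff_two_logisticIterate r i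

end Logistic
end Polynomial

/-- First three coefficient functions of the iterates of the logistic
polynomial `F = r·X − r·X²`: the coefficient of `X` in `F^{∘i}` is `r^i`; for `r ≠ 1`,
the coefficient of `X²` is `(r^i − r^{2i})/(r − 1)`; and for `r ≠ 1`, `r ≠ −1`, the
coefficient of `X³` is `(2r·r^i − 2(r+1)·r^{2i} + 2·r^{3i})/(r³ − r² − r + 1)`. -/
theorem logistic_iterate_coefficients (r : ℂ) (F : Polynomial ℂ)
    (hF : F = Polynomial.C r * Polynomial.X - Polynomial.C r * Polynomial.X ^ 2)
    (Fiter : ℕ → Polynomial ℂ) (h0 : Fiter 0 = Polynomial.X)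
    (hS : ∀ i : ℕ, Fiter (i + 1) = (Fiter i).comp F) :
    ∀ i : ℕ,
      (Fiter i).coeff 1 = r ^ i ∧
      (r ≠ 1 → (Fiter i).coeff 2 = (r ^ i - r ^ (2 * i)) / (r - 1)) ∧
      (r ≠ 1 → r ≠ -1 →
        (Fiter i).coeff 3 =
          (2 * r * r ^ i - 2 * (r + 1) * r ^ (2 * i) + 2 * r ^ (3 * i)) /
            (r ^ 3 - r ^ 2 - r + 1)) := by
  intro i
  have hFiter : Fiter i = logisticIterate r i := by
    subst hF
    exact comp_iterate_X_of_succ h0 hS i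
  rw [hFiter]
  refine ⟨coeff_one_logisticIterate r i, fun hr1 => ?_, fun hr1 hr_1 => ?_⟩
  · rw [eq_div_iff (sub_ne_zero.mpr hr1), mul_comm]
    exact sub_one_mul_coeff_two_logisticIterate r i
  · have hden : r ^ 3 - r ^ 2 - r + 1 ≠ 0 := by
      rw [show r ^ 3 - r ^ 2 - r + 1 = (r - 1) ^ 2 * (r + 1) by ring]
      exact mul_ne_zero (pow_ne_zero 2 (sub_ne_zero.mpr hr1))
        (fun h => hr_1 (eq_neg_of_add_eq_zero_left h))
    rw [eq_div_iff hden, mul_comm]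
    exact mul_coeff_three_logisticIterate r i
end

section
/- Let λ₀, λ₁ ∈ ℂ be nonzero with |λ₀| ≠ 1, and set q = log |λ₁| / log |λ₀|. Assume that q is irrational, or that arg(λ₁) − arg(λ₀)·q ≠ 0 and π / (arg(λ₁) − arg(λ₀)·q) is irrational. Then the map from ℕ × ℕ to ℂ sending (a₀, a₁) to λ₀^{a₀} · λ₁^{a₁} is injective; that is, all products λ₀^{a₀} λ₁^{a₁} over pairs of natural number exponents are pairwise distinct. -/
/-!
If two distinct exponent pairs give the same product, their difference `(m, n) ∈ ℤ²` is a
nontrivial relation `λ₀^m λ₁^n = 1`. Taking logarithms, `m log|λ₀| + n log|λ₁| = 0` and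
`m arg λ₀ + n arg λ₁ ∈ 2πℤ`. The first equation forces `q = -m/n` to be rational once `n ≠ 0`;
substituting it into the second gives `n (arg λ₁ - arg λ₀ q) = 2πk`, making
`π / (arg λ₁ - arg λ₀ q) = n / (2k)` rational as well. Hence `n = 0`, and then `m = 0`.
-/

lemma zpow_sub_mul_zpow_sub_eq_one {G : Type*} [CommGroupWithZero G] {x y : G}
    (hx : x ≠ 0) (hy : y ≠ 0) {a b : ℕ × ℕ} (h : x ^ a.1 * y ^ a.2 = x ^ b.1 * y ^ b.2) :
    x ^ ((a.1 : ℤ) - b.1) * y ^ ((a.2 : ℤ) - b.2) = 1 := by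
  rw [zpow_sub₀ hx, zpow_sub₀ hy, div_mul_div_comm, div_eq_one_iff_eq
    (mul_ne_zero (zpow_ne_zero _ hx) (zpow_ne_zero _ hy))]
  exact_mod_cast h

namespace Complex

lemma log_norm_and_arg_relation_of_zpow_mul_zpow_eq_one {x y : ℂ} (hx : x ≠ 0) (hy : y ≠ 0)
    {m n : ℤ} (h : x ^ m * y ^ n = 1) :
    m * Real.log ‖x‖ + n * Real.log ‖y‖ = 0 ∧
      ∃ k : ℤ, m * arg x + n * arg y = k * (2 * Real.pi) := by
  rw [← exp_log hx, ← exp_log hy, ← exp_int_mul, ← exp_int_mul, ← exp_add,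
    exp_eq_one_iff] at h
  obtain ⟨k, hk⟩ := h
  refine ⟨?_, k, ?_⟩
  · simpa [log_re] using congrArg re hk
  · simpa [log_im] using congrArg im hk

end Complex

namespace Irrational

lemma int_eq_zero_of_int_add_int_mul_eq_zero {q : ℝ} (hq : Irrational q) {m n : ℤ}
    (h : (m : ℝ) + n * q = 0) : n = 0 := by
  by_contra hn
  have hnR : (n : ℝ) ≠ 0 := Int.cast_ne_zero.mpr hn
  refine hq ⟨-m / n, ?_⟩
  push_cast
  field_simp
  linarith

lemma int_eq_zero_of_int_mul_eq_int_mul_two_pi {D : ℝ} (hπD : Irrational (Real.pi / D))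
    (hD : D ≠ 0) {n k : ℤ} (h : n * D = k * (2 * Real.pi)) : n = 0 := by
  rcases eq_or_ne k 0 with rfl | hk
  · simpa [hD] using h
  have hkR : (k : ℝ) ≠ 0 := Int.cast_ne_zero.mpr hk
  refine absurd ⟨n / (2 * k), ?_⟩ hπD
  push_cast
  rw [div_eq_div_iff (by positivity) hD]
  linarith

end Irrational

lemma int_relation_eq_zero_of_irrational {L₀ L₁ θ₀ θ₁ : ℝ} (hL₀ : L₀ ≠ 0) {m n k : ℤ}
    (hL : m * L₀ + n * L₁ = 0) (hθ : m * θ₀ + n * θ₁ = k * (2 * Real.pi))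
    (h : Irrational (L₁ / L₀) ∨
      (θ₁ - θ₀ * (L₁ / L₀) ≠ 0 ∧ Irrational (Real.pi / (θ₁ - θ₀ * (L₁ / L₀))))) :
    m = 0 ∧ n = 0 := by
  have hmn : (m : ℝ) + n * (L₁ / L₀) = 0 := by
    field_simp
    linarith
  suffices hn : n = 0 by
    subst hn
    exact ⟨by exact_mod_cast (by simpa using hmn : (m : ℝ) = 0), rfl⟩
  rcases h with hq | ⟨hD, hπD⟩
  · exact hq.int_eq_zero_of_int_add_int_mul_eq_zero hmn
  · refine hπD.int_eq_zero_of_int_mul_eq_int_mul_two_pi hD (k := k) ?_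
    linear_combination hθ - θ₀ * hmn

/-- Two-variable sufficient condition: for nonzero `λ₀, λ₁ ∈ ℂ` with
`|λ₀| ≠ 1` and `q = log |λ₁| / log |λ₀|`, if `q` is irrational, or if
`arg λ₁ − arg λ₀ · q ≠ 0` and `π / (arg λ₁ − arg λ₀ · q)` is irrational, then all the
products `λ₀^{a₀} λ₁^{a₁}` over natural exponents are pairwise distinct. -/
theorem two_variable_eigenvalue_products_injective (l0 l1 : ℂ)
    (h0 : l0 ≠ 0) (h1 : l1 ≠ 0) (habs : ‖l0‖ ≠ 1)
    (q : ℝ) (hq : q = Real.log ‖l1‖ / Real.log ‖l0‖)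
    (h : Irrational q ∨
      (Complex.arg l1 - Complex.arg l0 * q ≠ 0 ∧
        Irrational (Real.pi / (Complex.arg l1 - Complex.arg l0 * q)))) :
    Function.Injective (fun a : ℕ × ℕ => l0 ^ a.1 * l1 ^ a.2) := by
  intro a b hab
  obtain ⟨hlog, k, harg⟩ := Complex.log_norm_and_arg_relation_of_zpow_mul_zpow_eq_one h0 h1
    (zpow_sub_mul_zpow_sub_eq_one h0 h1 hab)
  have hL₀ : Real.log ‖l0‖ ≠ 0 := Real.log_ne_zero_of_pos_of_ne_one (norm_pos_iff.mpr h0) habs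
  subst hq
  obtain ⟨hm, hn⟩ := int_relation_eq_zero_of_irrational hL₀ hlog harg h
  ext <;> omega
end

section
/- Let k ≥ 1 and let F : Fin k → MvPolynomial (Fin k) ℂ be polynomials such that: each F p has vanishing constant coefficient; and the linear coefficient array is upper triangular, i.e. the coefficient of X_l in F p is zero whenever l < p. Let λ p denote the coefficient of X_p in F p. Then for every finitely supported exponent vector d : Fin k →₀ ℕ, the coefficient of the monomial X^d = ∏_p X_p^{d p} in the product ∏_{p} (F p)^{d p} equals ∏_{p} (λ p)^{d p}. (The diagonal entries of the upper triangular multi-variable Carleman transition matrix are the products of powers of the eigenvalues of the linear part.) -/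
/-!
Give the variable `X_i` the weight `k + i`. Then `X_p` is the only monomial of weight at most
`k + p` occurring in `F p`: the constant term vanishes, `X_l` has zero coefficient for `l < p`
and weight `k + l > k + p` for `l > p`, and every monomial of degree at least two weighs at least
`2k`. Lowest weighted homogeneous components multiply, so the component of `∏ p, F p ^ d p` of
weight `∑ p, d p * (k + p)` is `∏ p, (λ p • X_p) ^ d p = (∏ p, λ p ^ d p) • X^d`, and `X^d` has
exactly this weight.
-/

open Finset
open Finsupp (weight)

theorem Finsupp.exists_eq_single_one_of_weight_lt {σ : Type*} {w : σ → ℕ} {c : ℕ}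
    (hw : ∀ s, c ≤ w s) {e : σ →₀ ℕ} (he : e ≠ 0) (hlt : weight w e < 2 * c) :
    ∃ s, e = single s 1 := by
  obtain ⟨s, hs⟩ := Finsupp.ne_iff.mp he
  refine ⟨s, ?_⟩
  have hrest : e - single s 1 = 0 := by
    by_contra hne
    obtain ⟨t, ht⟩ := Finsupp.ne_iff.mp hne
    have := le_weight_of_ne_zero' w ht
    have := weight_sub_single_add (w := w) hs
    have := hw s
    have := hw t
    omega
  rw [← sub_add_single_one_cancel hs, hrest, zero_add]

namespace MvPowerSeries

variable {σ R : Type*} [CommSemiring R]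

def IsUniqueLowestMonomial (w : σ → ℕ) (f : MvPowerSeries σ R) (m : σ →₀ ℕ) : Prop :=
  ∀ e, coeff e f ≠ 0 → weight w e ≤ weight w m → e = m

variable {w : σ → ℕ}

theorem IsUniqueLowestMonomial.weight_le_weightedOrder {f : MvPowerSeries σ R} {m : σ →₀ ℕ}
    (hm : IsUniqueLowestMonomial w f m) : (weight w m : ℕ∞) ≤ f.weightedOrder w :=
  le_weightedOrder w fun e he ↦ by
    by_contra hfe
    obtain rfl := hm e hfe (by exact_mod_cast he.le)
    exact lt_irrefl _ he

theorem IsUniqueLowestMonomial.weightedHomogeneousComponent_eq {f : MvPowerSeries σ R}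
    {m : σ →₀ ℕ} (hm : IsUniqueLowestMonomial w f m) :
    weightedHomogeneousComponent w (weight w m) f = monomial m (coeff m f) := by
  classical
  ext e
  rw [coeff_weightedHomogeneousComponent, coeff_monomial]
  by_cases hem : e = m
  · simp [hem]
  · rw [if_neg hem, ite_eq_right_iff]
    exact fun hw ↦ not_not.mp fun hfe ↦ hem (hm e hfe hw.le)

theorem isUniqueLowestMonomial_one : IsUniqueLowestMonomial w (1 : MvPowerSeries σ R) 0 := by
  classical
  exact fun e he _ ↦ by_contra fun h ↦ by simp [coeff_one, h] at he

theorem weightedHomogeneousComponent_zero_one :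
    weightedHomogeneousComponent w 0 (1 : MvPowerSeries σ R) = 1 := by
  simpa using isUniqueLowestMonomial_one.weightedHomogeneousComponent_eq (w := w) (R := R)

theorem weightedHomogeneousComponent_prod {ι : Type*} (s : Finset ι) (f : ι → MvPowerSeries σ R)
    (p : ι → ℕ) (hf : ∀ i ∈ s, (p i : ℕ∞) ≤ (f i).weightedOrder w) :
    weightedHomogeneousComponent w (∑ i ∈ s, p i) (∏ i ∈ s, f i) =
      ∏ i ∈ s, weightedHomogeneousComponent w (p i) (f i) := by
  induction s using Finset.cons_induction with
  | empty => exact weightedHomogeneousComponent_zero_one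
  | cons a s ha ih =>
    have hs : ((∑ i ∈ s, p i : ℕ) : ℕ∞) ≤ (∏ i ∈ s, f i).weightedOrder w := by
      push_cast
      exact (sum_le_sum fun i hi ↦ hf i (mem_cons_of_mem hi)).trans (le_weightedOrder_prod w f s)
    rw [sum_cons, prod_cons, prod_cons,
      weightedHomogeneousComponent_mul_of_le_weightedOrder (hf a (mem_cons_self a s)) hs,
      ih fun i hi ↦ hf i (mem_cons_of_mem hi)]

theorem weightedHomogeneousComponent_pow {f : MvPowerSeries σ R} {p : ℕ}
    (hf : (p : ℕ∞) ≤ f.weightedOrder w) (n : ℕ) :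
    weightedHomogeneousComponent w (n * p) (f ^ n) = weightedHomogeneousComponent w p f ^ n := by
  simpa [prod_const, sum_const] using
    weightedHomogeneousComponent_prod (range n) (fun _ ↦ f) (fun _ ↦ p) fun _ _ ↦ hf

theorem mul_le_weightedOrder_pow {f : MvPowerSeries σ R} {p : ℕ}
    (hf : (p : ℕ∞) ≤ f.weightedOrder w) (n : ℕ) :
    ((n * p : ℕ) : ℕ∞) ≤ (f ^ n).weightedOrder w :=
  calc ((n * p : ℕ) : ℕ∞) = n • (p : ℕ∞) := by rw [nsmul_eq_mul]; push_cast; rfl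
    _ ≤ n • f.weightedOrder w := nsmul_le_nsmul_right hf n
    _ ≤ (f ^ n).weightedOrder w := le_weightedOrder_pow w n

theorem coeff_prod_pow_of_isUniqueLowestMonomial {ι : Type*} (s : Finset ι)
    (f : ι → MvPowerSeries σ R) (m : ι → σ →₀ ℕ) (n : ι → ℕ)
    (hm : ∀ i ∈ s, IsUniqueLowestMonomial w (f i) (m i)) :
    coeff (∑ i ∈ s, n i • m i) (∏ i ∈ s, f i ^ n i) = ∏ i ∈ s, coeff (m i) (f i) ^ n i := by
  have hpow : ∀ i ∈ s, weightedHomogeneousComponent w (n i * weight w (m i)) (f i ^ n i) =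
      monomial (n i • m i) (coeff (m i) (f i) ^ n i) := fun i hi ↦ by
    rw [weightedHomogeneousComponent_pow (hm i hi).weight_le_weightedOrder,
      (hm i hi).weightedHomogeneousComponent_eq, monomial_pow]
  have hweight : weight w (∑ i ∈ s, n i • m i) = ∑ i ∈ s, n i * weight w (m i) := by
    simp only [map_sum, map_nsmul, smul_eq_mul]
  calc coeff (∑ i ∈ s, n i • m i) (∏ i ∈ s, f i ^ n i)
      = coeff (∑ i ∈ s, n i • m i) (weightedHomogeneousComponent w
          (∑ i ∈ s, n i * weight w (m i)) (∏ i ∈ s, f i ^ n i)) := by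
        rw [coeff_weightedHomogeneousComponent, if_pos hweight]
    _ = coeff (∑ i ∈ s, n i • m i)
          (∏ i ∈ s, monomial (n i • m i) (coeff (m i) (f i) ^ n i)) := by
        rw [weightedHomogeneousComponent_prod s _ _
            fun i hi ↦ mul_le_weightedOrder_pow (hm i hi).weight_le_weightedOrder (n i),
          prod_congr rfl hpow]
    _ = ∏ i ∈ s, coeff (m i) (f i) ^ n i := by
        rw [prod_monomial, coeff_monomial_same]

end MvPowerSeries

def carlemanWeight (k : ℕ) (i : Fin k) : ℕ := k + i

open MvPolynomial in
theorem isUniqueLowestMonomial_carlemanWeight {R : Type*} [CommSemiring R] {k : ℕ}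
    {F : MvPolynomial (Fin k) R} {p : Fin k} (h0 : constantCoeff F = 0)
    (htri : ∀ l < p, coeff (Finsupp.single l 1) F = 0) :
    MvPowerSeries.IsUniqueLowestMonomial (carlemanWeight k) (F : MvPowerSeries (Fin k) R)
      (Finsupp.single p 1) := by
  intro e he hw
  rw [coeff_coe] at he
  have he0 : e ≠ 0 := by
    rintro rfl
    exact he (by rwa [← constantCoeff_eq])
  simp only [Finsupp.weight_single, carlemanWeight, one_smul] at hw
  obtain ⟨l, rfl⟩ := Finsupp.exists_eq_single_one_of_weight_lt (w := carlemanWeight k)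
    (fun i ↦ Nat.le_add_right k i) he0 (hw.trans_lt (by omega : k + (p : ℕ) < 2 * k))
  simp only [Finsupp.weight_single, carlemanWeight, one_smul] at hw
  obtain hlp | rfl := (Fin.le_iff_val_le_val.mpr (by omega : (l : ℕ) ≤ p)).lt_or_eq
  · exact absurd (htri l hlp) he
  · rfl

theorem multivariable_carleman_diagonal_entries_general
    (k : ℕ) (F : Fin k → MvPolynomial (Fin k) ℂ)
    (h0 : ∀ p, MvPolynomial.constantCoeff (F p) = 0)
    (htri : ∀ p l : Fin k, l < p →
      MvPolynomial.coeff (Finsupp.single l 1) (F p) = 0)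
    (lam : Fin k → ℂ)
    (hlam : ∀ p, lam p = MvPolynomial.coeff (Finsupp.single p 1) (F p))
    (d : Fin k →₀ ℕ) :
    MvPolynomial.coeff d (∏ p, (F p) ^ d p) = ∏ p, lam p ^ d p := by
  have hd : ∑ p, d p • Finsupp.single p 1 = d := by
    simp only [Finsupp.smul_single_one, Finsupp.univ_sum_single]
  have key := MvPowerSeries.coeff_prod_pow_of_isUniqueLowestMonomial univ
    (fun p ↦ (F p : MvPowerSeries (Fin k) ℂ)) (fun p ↦ Finsupp.single p 1) d
    fun p _ ↦ isUniqueLowestMonomial_carlemanWeight (h0 p) (htri p)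
  simp only [hd, MvPolynomial.coeff_coe, ← hlam, ← MvPolynomial.coe_pow] at key
  rw [← MvPolynomial.coeff_coe, ← MvPolynomial.coeToMvPowerSeries.ringHom_apply, map_prod]
  simpa only [MvPolynomial.coeToMvPowerSeries.ringHom_apply] using key

/-- Diagonal entries of the upper triangular multi-variable Carleman
transition matrix: if each `F p` has vanishing constant coefficient and the linear
coefficient array is upper triangular (the coefficient of `X_l` in `F p` vanishes for
`l < p`), and `λ p` is the coefficient of `X_p` in `F p`, then the coefficient of the
monomial `X^d` in `∏ p, (F p)^(d p)` equals `∏ p, (λ p)^(d p)`. -/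
theorem multivariable_carleman_diagonal_entries
    (k : ℕ) (hk : 1 ≤ k) (F : Fin k → MvPolynomial (Fin k) ℂ)
    (h0 : ∀ p, MvPolynomial.constantCoeff (F p) = 0)
    (htri : ∀ p l : Fin k, l < p →
      MvPolynomial.coeff (Finsupp.single l 1) (F p) = 0)
    (lam : Fin k → ℂ)
    (hlam : ∀ p, lam p = MvPolynomial.coeff (Finsupp.single p 1) (F p))
    (d : Fin k →₀ ℕ) :
    MvPolynomial.coeff d (∏ p, (F p) ^ d p) = ∏ p, lam p ^ d p :=
  multivariable_carleman_diagonal_entries_general k F h0 htri lam hlam d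
end
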